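/- arXiv:1508.05446 — 10 statements merged into one kernel-verified Lean document; each statement's English description precedes it below -/
import Mathlib

section
/- Let E be a finite set and let ℒ ⊆ L^E be a strong elimination system, i.e.: (OM2) for all x, y ∈ ℒ, x∘y ∈ ℒ; and (OM3) for all x, y ∈ ℒ and every e ∈ E with x(e) = −y(e) ≠ 0, there exists z ∈ ℒ with z(e) = 0 and z(f) = (x∘y)(f) for every f ∈ E that does not satisfy x(f) = −y(f) ≠ 0. Then for all x, y ∈ ℒ with Z(x) = Z(y), the elements x and y are connected by the reflexive–transitive closure of the relation R on covectors defined by: R(u, v) holds iff u ∈ ℒ, v ∈ ℒ, Z(u) = Z(v), and there exists b ∈ ℒ with b∘u = u and b∘v = v (a common upper bound). (Hence every strong elimination system is a connected left regular band.) -/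
private lemma sign_eq_of_ne_neg {a b : SignType} (ha : a ≠ 0) (hb : b ≠ 0) (h : a ≠ -b) :
    a = b := by revert h hb ha; revert a b; decide

private lemma sign_ne_neg_self {a : SignType} (ha : a ≠ 0) : a ≠ -a := by
  revert ha; revert a; decide

/-- Every strong elimination system is a connected left regular band: two covectors of
`ℒ` with the same zero set are joined by a chain of pairs possessing common upper
bounds in `ℒ`. -/
theorem stmt4 {E : Type*} [Fintype E] (ℒ : Set (E → SignType))
    (om2 : ∀ x ∈ ℒ, ∀ y ∈ ℒ, (fun e => if x e = 0 then y e else x e) ∈ ℒ)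
    (om3 : ∀ x ∈ ℒ, ∀ y ∈ ℒ, ∀ e : E, x e = -(y e) → x e ≠ 0 →
      ∃ z ∈ ℒ, z e = 0 ∧ ∀ f : E, ¬(x f = -(y f) ∧ x f ≠ 0) →
        z f = (if x f = 0 then y f else x f)) :
    ∀ x ∈ ℒ, ∀ y ∈ ℒ, {e : E | x e = 0} = {e : E | y e = 0} →
      Relation.ReflTransGen
        (fun u v : E → SignType => u ∈ ℒ ∧ v ∈ ℒ ∧
          {e : E | u e = 0} = {e : E | v e = 0} ∧
          ∃ b ∈ ℒ, (fun e => if b e = 0 then u e else b e) = u ∧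
            (fun e => if b e = 0 then v e else b e) = v)
        x y := by
  classical
  set R := (fun u v : E → SignType => u ∈ ℒ ∧ v ∈ ℒ ∧
          {e : E | u e = 0} = {e : E | v e = 0} ∧
          ∃ b ∈ ℒ, (fun e => if b e = 0 then u e else b e) = u ∧
            (fun e => if b e = 0 then v e else b e) = v) with hR
  -- one-step lemma when there are no separating elements
  have base : ∀ x ∈ ℒ, ∀ y ∈ ℒ, {e : E | x e = 0} = {e : E | y e = 0} →
      (∀ f, ¬(x f = -(y f) ∧ x f ≠ 0)) → R x y := by
    intro x hx y hy hzeq hS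
    have hxy0 : ∀ f, x f = 0 ↔ y f = 0 := fun f => Set.ext_iff.mp hzeq f
    refine ⟨hx, hy, hzeq, (fun e => if x e = 0 then y e else x e), om2 x hx y hy, ?_, ?_⟩
    · funext f
      by_cases h : x f = 0
      · simp [h, (hxy0 f).mp h]
      · simp [h]
    · funext f
      by_cases h : x f = 0
      · simp only [if_pos h]
        by_cases h' : y f = 0 <;> simp [h']
      · have hy0 : y f ≠ 0 := fun h' => h ((hxy0 f).mpr h')
        have hne : x f ≠ -(y f) := fun h' => hS f ⟨h', h⟩
        have : x f = y f := sign_eq_of_ne_neg h hy0 hne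
        simp [h, if_neg h, this, hy0]
  suffices H : ∀ n : ℕ, ∀ x ∈ ℒ, ∀ y ∈ ℒ, {e : E | x e = 0} = {e : E | y e = 0} →
      (Finset.univ.filter fun f => x f = -(y f) ∧ x f ≠ 0).card ≤ n →
      Relation.ReflTransGen R x y by
    intro x hx y hy hzeq
    exact H _ x hx y hy hzeq le_rfl
  intro n
  induction n with
  | zero =>
    intro x hx y hy hzeq hcard
    have hS : ∀ f, ¬(x f = -(y f) ∧ x f ≠ 0) := by
      intro f hf
      have : f ∈ Finset.univ.filter fun f => x f = -(y f) ∧ x f ≠ 0 :=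
        Finset.mem_filter.mpr ⟨Finset.mem_univ f, hf⟩
      have := Finset.card_pos.mpr ⟨f, this⟩
      omega
    exact Relation.ReflTransGen.single (base x hx y hy hzeq hS)
  | succ n ih =>
    intro x hx y hy hzeq hcard
    by_cases hS : ∀ f, ¬(x f = -(y f) ∧ x f ≠ 0)
    · exact Relation.ReflTransGen.single (base x hx y hy hzeq hS)
    · push_neg at hS
      obtain ⟨e, he1, he2⟩ := hS
      have hxy0 : ∀ f, x f = 0 ↔ y f = 0 := fun f => Set.ext_iff.mp hzeq f
      obtain ⟨z, hzmem, hze, hzf⟩ := om3 x hx y hy e he1 he2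
      have hz0 : ∀ f, x f = 0 → z f = 0 := by
        intro f h
        have := hzf f (fun hc => hc.2 h)
        rw [this, if_pos h]
        exact (hxy0 f).mp h
      set w : E → SignType := fun f => if z f = 0 then x f else z f with hw
      set x' : E → SignType := fun f => if z f = 0 then y f else z f with hx'
      have hwmem : w ∈ ℒ := by
        have := om2 z hzmem x hx
        simpa [hw] using this
      have hx'mem : x' ∈ ℒ := by
        have := om2 z hzmem y hy
        simpa [hx'] using this
      -- zero sets
      have hw0 : ∀ f, w f = 0 ↔ x f = 0 := by
        intro f
        by_cases h : z f = 0
        · simp [hw, h]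
        · simp only [hw, if_neg h]
          constructor
          · intro h'; exact absurd h' h
          · intro h'; exact absurd (hz0 f h') h
      have hx'0 : ∀ f, x' f = 0 ↔ y f = 0 := by
        intro f
        by_cases h : z f = 0
        · simp [hx', h]
        · simp only [hx', if_neg h]
          constructor
          · intro h'; exact absurd h' h
          · intro h'; exact absurd (hz0 f ((hxy0 f).mpr h')) h
      have hZw : {f : E | w f = 0} = {f : E | x f = 0} := Set.ext fun f => hw0 f
      have hZx' : {f : E | x' f = 0} = {f : E | y f = 0} := Set.ext fun f => hx'0 f
      -- separating sets are strictly smaller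
      have hsub1 : (Finset.univ.filter fun f => x f = -(w f) ∧ x f ≠ 0) ⊆
          (Finset.univ.filter fun f => x f = -(y f) ∧ x f ≠ 0).erase e := by
        intro f hf
        simp only [Finset.mem_filter, Finset.mem_univ, true_and] at hf
        obtain ⟨hf1, hf2⟩ := hf
        have hzfne : z f ≠ 0 := by
          intro h
          rw [hw] at hf1
          simp only [if_pos h] at hf1
          exact sign_ne_neg_self hf2 hf1
        have hwf : w f = z f := by simp [hw, hzfne]
        have hfS : x f = -(y f) ∧ x f ≠ 0 := by
          by_contra hc
          have := hzf f hc
          rw [this, if_neg hf2] at hwf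
          rw [hwf] at hf1
          exact sign_ne_neg_self hf2 hf1
        have hfe : f ≠ e := by
          intro h; subst h; exact hzfne hze
        exact Finset.mem_erase.mpr ⟨hfe, Finset.mem_filter.mpr ⟨Finset.mem_univ f, hfS⟩⟩
      have hsub2 : (Finset.univ.filter fun f => x' f = -(y f) ∧ x' f ≠ 0) ⊆
          (Finset.univ.filter fun f => x f = -(y f) ∧ x f ≠ 0).erase e := by
        intro f hf
        simp only [Finset.mem_filter, Finset.mem_univ, true_and] at hf
        obtain ⟨hf1, hf2⟩ := hf
        have hy0 : y f ≠ 0 := by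
          intro h
          have : x' f = 0 := (hx'0 f).mpr h
          exact hf2 this
        have hzfne : z f ≠ 0 := by
          intro h
          rw [hx'] at hf1
          simp only [if_pos h] at hf1
          exact sign_ne_neg_self hy0 hf1
        have hx'f : x' f = z f := by simp [hx', hzfne]
        have hfS : x f = -(y f) ∧ x f ≠ 0 := by
          by_contra hc
          have hzv := hzf f hc
          rw [hzv] at hx'f
          by_cases hx0 : x f = 0
          · exact hzfne (hz0 f hx0)
          · rw [if_neg hx0] at hx'f
            exact hc ⟨by rw [← hx'f]; exact hf1, hx0⟩
        have hfe : f ≠ e := fun h => by subst h; exact hzfne hze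
        exact Finset.mem_erase.mpr ⟨hfe, Finset.mem_filter.mpr ⟨Finset.mem_univ f, hfS⟩⟩
      have heS : e ∈ Finset.univ.filter fun f => x f = -(y f) ∧ x f ≠ 0 :=
        Finset.mem_filter.mpr ⟨Finset.mem_univ e, he1, he2⟩
      have hcard' : ((Finset.univ.filter fun f => x f = -(y f) ∧ x f ≠ 0).erase e).card ≤ n := by
        have := Finset.card_erase_of_mem heS
        omega
      -- chain x →* w
      have hZxw : {f : E | x f = 0} = {f : E | w f = 0} := hZw.symm
      have h1 : Relation.ReflTransGen R x w := by
        apply ih x hx w hwmem hZxw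
        calc (Finset.univ.filter fun f => x f = -(w f) ∧ x f ≠ 0).card
            ≤ _ := Finset.card_le_card hsub1
          _ ≤ n := hcard'
      -- single step w R x'
      have h2 : R w x' := by
        refine ⟨hwmem, hx'mem, by rw [hZw, hZx', hzeq], z, hzmem, ?_, ?_⟩
        · funext f
          by_cases h : z f = 0 <;> simp [hw, h]
        · funext f
          by_cases h : z f = 0 <;> simp [hx', h]
      -- chain x' →* y
      have h3 : Relation.ReflTransGen R x' y := by
        apply ih x' hx'mem y hy hZx'
        calc (Finset.univ.filter fun f => x' f = -(y f) ∧ x' f ≠ 0).card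
            ≤ _ := Finset.card_le_card hsub2
          _ ≤ n := hcard'
      exact (h1.trans (Relation.ReflTransGen.single h2)).trans h3
end

section
/- Let B be a finite left regular band and c ∈ B; set X := Bc, B_{≥X} := {b ∈ B : X ⊆ Bb} and L_X := {b ∈ B : Bb = X}. Then the following are equivalent: (i) any two elements of B_{≥X} are joined by the reflexive–transitive closure of the relation 'u, v ∈ B_{≥X} and (u ≤ v or v ≤ u)' (connectivity of the comparability graph of B_{≥X}, equivalently of the Hasse diagram or the order complex Δ(B_{≥X})); (ii) any two elements of L_X are joined by the reflexive–transitive closure of the relation 'x, y ∈ L_X and there exists b ∈ B with b·x = x and b·y = y' (connectivity of the graph Γ(X) whose vertices are L_X and whose edges join elements with a common upper bound). -/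
/-- The principal left ideal of `a` in a semigroup: `Ba = {x * a : x ∈ B}`. -/
def leftIdeal {B : Type*} [Mul B] (a : B) : Set B := {x : B | ∃ y : B, y * a = x}

/-!
The retraction `u ↦ u * c` maps `B_{≥X}` onto `L_X`, fixing `L_X`, and sends a comparable pair
`u ≤ v` to a pair with the common upper bound `v`. Conversely, two elements `x, y` of `L_X` with
a common upper bound `d` lie on the path `x ≤ d ≥ y` inside `B_{≥X}`, and every `u ∈ B_{≥X}`
is comparable with `u * c ≤ u`. So paths transfer in both directions.
-/

namespace LeftRegularBand

variable {B : Type*} [Semigroup B]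

/-- `B_{≥X}` for `X = Bc`. -/
def idealsAbove (c : B) : Set B := {b : B | leftIdeal c ⊆ leftIdeal b}

/-- `L_X` for `X = Bc`. -/
def lClass (c : B) : Set B := {b : B | leftIdeal b = leftIdeal c}

/-- The comparability graph of `B_{≥X}`. -/
def ComparableAbove (c u v : B) : Prop :=
  u ∈ idealsAbove c ∧ v ∈ idealsAbove c ∧ (v * u = u ∨ u * v = v)

/-- The graph `Γ(X)`. -/
def HaveUpperBoundIn (c x y : B) : Prop :=
  x ∈ lClass c ∧ y ∈ lClass c ∧ ∃ b : B, b * x = x ∧ b * y = y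

theorem leftIdeal_subset_leftIdeal_iff (idem : ∀ x : B, x * x = x) {a b : B} :
    leftIdeal a ⊆ leftIdeal b ↔ a * b = a := by
  constructor
  · intro h
    obtain ⟨y, rfl⟩ := h ⟨a, idem a⟩
    rw [mul_assoc, idem]
  · rintro h x ⟨y, rfl⟩
    exact ⟨y * a, by rw [mul_assoc, h]⟩

theorem mul_right_mem_lClass (idem : ∀ x : B, x * x = x) {c u : B} (hu : u ∈ idealsAbove c) :
    u * c ∈ lClass c := by
  have hcu : c * u = c := (leftIdeal_subset_leftIdeal_iff idem).mp hu
  apply le_antisymm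
  · exact (leftIdeal_subset_leftIdeal_iff idem).mpr (by rw [mul_assoc, idem])
  · exact (leftIdeal_subset_leftIdeal_iff idem).mpr (by rw [← mul_assoc, hcu, idem])

theorem lClass_subset_idealsAbove (c : B) : lClass c ⊆ idealsAbove c :=
  fun _ hx => hx.symm.le

theorem mul_right_eq_self_of_mem_lClass (idem : ∀ x : B, x * x = x) {c x : B}
    (hx : x ∈ lClass c) : x * c = x :=
  (leftIdeal_subset_leftIdeal_iff idem).mp hx.le

theorem ComparableAbove.symm {c u v : B} (h : ComparableAbove c u v) : ComparableAbove c v u :=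
  ⟨h.2.1, h.1, h.2.2.symm⟩

theorem comparableAbove_mul_right (idem : ∀ x : B, x * x = x) {c u : B}
    (hu : u ∈ idealsAbove c) : ComparableAbove c u (u * c) :=
  ⟨hu, lClass_subset_idealsAbove c (mul_right_mem_lClass idem hu),
    Or.inr (by rw [← mul_assoc, idem])⟩

theorem ComparableAbove.haveUpperBoundIn_mul_right (idem : ∀ x : B, x * x = x) {c u v : B}
    (h : ComparableAbove c u v) : HaveUpperBoundIn c (u * c) (v * c) := by
  obtain ⟨hu, hv, hvu | huv⟩ := h
  · exact ⟨mul_right_mem_lClass idem hu, mul_right_mem_lClass idem hv,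
      v, by rw [← mul_assoc, hvu], by rw [← mul_assoc, idem]⟩
  · exact ⟨mul_right_mem_lClass idem hu, mul_right_mem_lClass idem hv,
      u, by rw [← mul_assoc, idem], by rw [← mul_assoc, huv]⟩

/-- In a left regular band `d * x = x` forces `x * d = x`, so an upper bound of an element of
`L_X` lies in `B_{≥X}`. -/
theorem HaveUpperBoundIn.reflTransGen_comparableAbove (idem : ∀ x : B, x * x = x)
    (lrb : ∀ x y : B, x * y * x = x * y) {c x y : B} (h : HaveUpperBoundIn c x y) :
    Relation.ReflTransGen (ComparableAbove c) x y := by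
  obtain ⟨hx, hy, d, hdx, hdy⟩ := h
  have hxd : x * d = x := by rw [← hdx, lrb]
  have hd : d ∈ idealsAbove c :=
    hx.symm.le.trans ((leftIdeal_subset_leftIdeal_iff idem).mpr hxd)
  exact .head ⟨lClass_subset_idealsAbove c hx, hd, Or.inl hdx⟩
    (.single ⟨hd, lClass_subset_idealsAbove c hy, Or.inr hdy⟩)

end LeftRegularBand

open LeftRegularBand in
theorem stmt5_general {B : Type*} [Semigroup B]
    (idem : ∀ x : B, x * x = x) (lrb : ∀ x y : B, x * y * x = x * y) (c : B) :
    (∀ a ∈ {b : B | leftIdeal c ⊆ leftIdeal b},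
      ∀ b ∈ {b : B | leftIdeal c ⊆ leftIdeal b},
        Relation.ReflTransGen
          (fun u v : B => u ∈ {b : B | leftIdeal c ⊆ leftIdeal b} ∧
            v ∈ {b : B | leftIdeal c ⊆ leftIdeal b} ∧ (v * u = u ∨ u * v = v)) a b) ↔
    (∀ x ∈ {b : B | leftIdeal b = leftIdeal c},
      ∀ y ∈ {b : B | leftIdeal b = leftIdeal c},
        Relation.ReflTransGen
          (fun x' y' : B => x' ∈ {b : B | leftIdeal b = leftIdeal c} ∧
            y' ∈ {b : B | leftIdeal b = leftIdeal c} ∧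
            ∃ b : B, b * x' = x' ∧ b * y' = y') x y) := by
  change (∀ a ∈ idealsAbove c, ∀ b ∈ idealsAbove c, Relation.ReflTransGen (ComparableAbove c) a b)
    ↔ ∀ x ∈ lClass c, ∀ y ∈ lClass c, Relation.ReflTransGen (HaveUpperBoundIn c) x y
  constructor
  · intro hconn x hx y hy
    have hpath := Relation.ReflTransGen.lift (· * c)
      (fun _ _ h => ComparableAbove.haveUpperBoundIn_mul_right idem h) _ _
      (hconn x (lClass_subset_idealsAbove c hx) y (lClass_subset_idealsAbove c hy))
    rwa [Function.onFun, mul_right_eq_self_of_mem_lClass idem hx,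
      mul_right_eq_self_of_mem_lClass idem hy] at hpath
  · intro hconn a ha b hb
    have hpath := Relation.reflTransGen_closed
      (fun _ _ h => HaveUpperBoundIn.reflTransGen_comparableAbove idem lrb h) _ _
      (hconn _ (mul_right_mem_lClass idem ha) _ (mul_right_mem_lClass idem hb))
    exact .head (comparableAbove_mul_right idem ha)
      (hpath.tail (comparableAbove_mul_right idem hb).symm)

/-- For a finite left regular band `B` and `X = Bc`, the order complex of
`B_{≥X}` is connected if and only if the graph `Γ(X)` on the `L`-class `L_X`,
joining elements with a common upper bound, is connected. -/
theorem stmt5 {B : Type*} [Semigroup B] [Finite B]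
    (idem : ∀ x : B, x * x = x) (lrb : ∀ x y : B, x * y * x = x * y) (c : B) :
    (∀ a ∈ {b : B | leftIdeal c ⊆ leftIdeal b},
      ∀ b ∈ {b : B | leftIdeal c ⊆ leftIdeal b},
        Relation.ReflTransGen
          (fun u v : B => u ∈ {b : B | leftIdeal c ⊆ leftIdeal b} ∧
            v ∈ {b : B | leftIdeal c ⊆ leftIdeal b} ∧ (v * u = u ∨ u * v = v)) a b) ↔
    (∀ x ∈ {b : B | leftIdeal b = leftIdeal c},
      ∀ y ∈ {b : B | leftIdeal b = leftIdeal c},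
        Relation.ReflTransGen
          (fun x' y' : B => x' ∈ {b : B | leftIdeal b = leftIdeal c} ∧
            y' ∈ {b : B | leftIdeal b = leftIdeal c} ∧
            ∃ b : B, b * x' = x' ∧ b * y' = y') x y) :=
  stmt5_general idem lrb c
end

section
/- Let B be a finite left regular band and k a commutative ring with unit. Then the semigroup algebra kB has a right identity: there exists η ∈ kB such that x·η = x for all x ∈ kB. -/
/-!
If `η` is a right identity for some elements `x` and `c` is a further idempotent, then
`η + c - c η` is a right identity for `c` and still for every `x`, because the left regular band
identity gives `x c η = x c x η = x c x = x c`. Adding the basis elements of `kB` one at a time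
yields a right identity for the whole basis, hence for `kB`.
-/

theorem exists_forall_mul_eq_self_of_leftRegularBand {R ι : Type*} [NonUnitalRing R]
    (f : ι → R) (s : Finset ι) (idem : ∀ i ∈ s, f i * f i = f i)
    (lrb : ∀ i ∈ s, ∀ j ∈ s, f i * f j * f i = f i * f j) :
    ∃ η : R, ∀ i ∈ s, f i * η = f i := by
  induction s using Finset.cons_induction with
  | empty => exact ⟨0, by simp⟩
  | cons c s hc ih =>
    simp only [Finset.forall_mem_cons] at idem lrb
    obtain ⟨η, hη⟩ := ih idem.2 fun i hi j hj => lrb.2 i hi |>.2 j hj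
    refine ⟨η + f c - f c * η, (Finset.forall_mem_cons hc _).2 ⟨?_, fun i hi => ?_⟩⟩
    · rw [mul_sub, mul_add, ← mul_assoc, idem.1]
      abel
    · have hic : f i * f c * η = f i * f c := by
        rw [← (lrb.2 i hi).1, mul_assoc, hη i hi]
      rw [mul_sub, mul_add, hη i hi, ← mul_assoc, hic]
      abel

theorem MonoidAlgebra.mul_eq_self_of_forall_single_one_mul_eq {k B : Type*} [CommSemiring k]
    [Mul B] {η : MonoidAlgebra k B} (hη : ∀ b : B, single b (1 : k) * η = single b 1)
    (x : MonoidAlgebra k B) : x * η = x := by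
  have : LinearMap.mulRight k η = LinearMap.id :=
    MonoidAlgebra.lhom_ext' fun b => LinearMap.ext_ring (hη b)
  exact LinearMap.congr_fun this x

/-- The semigroup algebra of a finite left regular band over any commutative ring
has a right identity. -/
theorem stmt6 {B : Type*} [Semigroup B] [Fintype B] {k : Type*} [CommRing k]
    (idem : ∀ x : B, x * x = x) (lrb : ∀ x y : B, x * y * x = x * y) :
    ∃ η : MonoidAlgebra k B, ∀ x : MonoidAlgebra k B, x * η = x := by
  obtain ⟨η, hη⟩ := exists_forall_mul_eq_self_of_leftRegularBand (MonoidAlgebra.ofMagma k B)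
    Finset.univ (fun i _ => by rw [← map_mul, idem])
    (fun i _ j _ => by rw [← map_mul, ← map_mul, lrb])
  exact ⟨η, MonoidAlgebra.mul_eq_self_of_forall_single_one_mul_eq
    fun b => hη b (Finset.mem_univ b)⟩
end

section
/- Let B be a finite left regular band. Call B connected if for every c ∈ B, any two elements a, b of the contraction B_{≥Bc} := {u ∈ B : Bc ⊆ Bu} are joined by the reflexive–transitive closure of the relation 'u, v ∈ B_{≥Bc} and (v·u = u or u·v = v)' (i.e., the comparability graph, equivalently the Hasse diagram or order complex, of B_{≥Bc} is connected). Then the following are equivalent: (1) B is connected; (2) the semigroup ring ℤB has a two-sided multiplicative identity; (3) for every commutative ring k with unit, the semigroup algebra kB has a two-sided multiplicative identity. -/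
open MonoidAlgebra Relation

structure IsLeftRegularBand (B : Type*) [Mul B] : Prop where
  idem : ∀ x : B, x * x = x
  left_regular : ∀ x y : B, x * y * x = x * y

/-- For a band, `c * u = c` is the condition `Bc ⊆ Bu` defining the contraction `B_{≥Bc}`, and
`ContractionRel c` is the comparability relation of `≤` on it. -/
def ContractionRel {B : Type*} [Mul B] (c u v : B) : Prop :=
  c * u = c ∧ c * v = c ∧ (v * u = u ∨ u * v = v)

theorem ContractionRel.symm {B : Type*} [Mul B] {c u v : B} (h : ContractionRel c u v) :
    ContractionRel c v u :=
  ⟨h.2.1, h.1, h.2.2.symm⟩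

def ContractionsConnected (B : Type*) [Mul B] : Prop :=
  ∀ c a : B, c * a = c → ∀ b : B, c * b = c → ReflTransGen (ContractionRel c) a b

theorem apply_eq_of_reflTransGen_contractionRel {B α : Type*} [Mul B] {φ : B → α}
    (hφ : ∀ b y, φ (b * y) = φ b) {c a b : B} (h : ReflTransGen (ContractionRel c) a b) :
    φ a = φ b := by
  induction h with
  | refl => rfl
  | tail _ hrel ih =>
    rcases hrel.2.2 with h | h
    all_goals rw [ih, ← h, hφ]

theorem mul_eq_of_reflTransGen_contractionRel {B : Type*} [Mul B] {c a w : B} (ha : c * a = c)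
    (h : ReflTransGen (ContractionRel c) a w) : c * w = c := by
  cases h with
  | refl => exact ha
  | tail _ hrel => exact hrel.2.1

section Semigroup

variable {B : Type*} [Semigroup B]

theorem leftIdeal_subset_leftIdeal_iff (idem : ∀ x : B, x * x = x) {c u : B} :
    leftIdeal c ⊆ leftIdeal u ↔ c * u = c := by
  constructor
  · intro h
    obtain ⟨y, rfl⟩ : c ∈ leftIdeal u := h ⟨c, idem c⟩
    rw [mul_assoc, idem]
  · rintro h x ⟨y, rfl⟩
    exact ⟨y * c, by rw [mul_assoc, h]⟩

def contraction (u : B) : Subsemigroup B where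
  carrier := {v | u * v = u}
  mul_mem' {x y} (hx : u * x = u) (hy : u * y = u) := show u * (x * y) = u by
    rw [← mul_assoc, hx, hy]

theorem mem_contraction {u v : B} : v ∈ contraction u ↔ u * v = u := Iff.rfl

theorem contractionsConnected_contraction (hconn : ContractionsConnected B) (u : B) :
    ContractionsConnected (contraction u) := by
  intro c a ha b hb
  suffices ∀ w, ReflTransGen (ContractionRel c.1) a w →
      ∀ hw : w ∈ contraction u, ReflTransGen (ContractionRel c) a ⟨w, hw⟩ from
    this b (hconn c a (congrArg Subtype.val ha) b (congrArg Subtype.val hb)) b.2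
  intro w hpath
  induction hpath with
  | refl => exact fun _ => .refl
  | @tail v w _ hrel ih =>
    -- the path stays in `contraction u` because `u * c = u`
    have hv : v ∈ contraction u := by
      rw [mem_contraction, ← c.2, mul_assoc, hrel.1]
    exact fun _ => (ih hv).tail
      ⟨Subtype.ext hrel.1, Subtype.ext hrel.2.1, hrel.2.2.imp Subtype.ext Subtype.ext⟩

namespace IsLeftRegularBand

theorem mul_eq_of_mul_mul_eq_left (hB : IsLeftRegularBand B) {c x y : B} (h : c * (x * y) = c) :
    c * x = c := by
  rw [← h, mul_assoc, hB.left_regular]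

theorem mul_eq_of_mul_mul_eq_right (hB : IsLeftRegularBand B) {c x y : B}
    (h : c * (x * y) = c) : c * y = c := by
  rw [← h, mul_assoc, mul_assoc, hB.idem]

theorem mem_contraction_of_mul_mem (hB : IsLeftRegularBand B) (u x y : B)
    (h : x * y ∈ contraction u) : x ∈ contraction u ∧ y ∈ contraction u :=
  ⟨hB.mul_eq_of_mul_mul_eq_left h, hB.mul_eq_of_mul_mul_eq_right h⟩

theorem contractionRel_mul_right (hB : IsLeftRegularBand B) {c x p : B} (h : c * (x * p) = c) :
    ContractionRel c x (x * p) :=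
  ⟨hB.mul_eq_of_mul_mul_eq_left h, h, .inr (by rw [← mul_assoc, hB.idem])⟩

theorem mul_mul_eq_of_mul_eq (hB : IsLeftRegularBand B) {z u : B} (h : z * u = z) (x : B) :
    z * x * u = z * x := by
  rw [← h]
  simp only [mul_assoc]
  rw [← mul_assoc u x u, hB.left_regular]

theorem exists_forall_mul_eq [Finite B] [Nonempty B] (hB : IsLeftRegularBand B) :
    ∃ z : B, ∀ u, z * u = z := by
  classical
  have := Fintype.ofFinite B
  suffices ∀ s : Finset B, ∃ z : B, ∀ u ∈ s, z * u = z by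
    simpa using this Finset.univ
  intro s
  induction s using Finset.induction_on with
  | empty => exact ⟨Classical.arbitrary B, by simp⟩
  | insert a s _ ih =>
    obtain ⟨z, hz⟩ := ih
    refine ⟨z * a, Finset.forall_mem_insert .. |>.mpr ⟨?_, fun u hu => ?_⟩⟩
    · rw [mul_assoc, hB.idem]
    · exact hB.mul_mul_eq_of_mul_eq (hz u hu) a

protected theorem subsemigroup (hB : IsLeftRegularBand B) (S : Subsemigroup B) :
    IsLeftRegularBand S :=
  ⟨fun x => Subtype.ext (hB.idem x), fun x y => Subtype.ext (hB.left_regular x y)⟩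

end IsLeftRegularBand
end Semigroup

namespace MonoidAlgebra

variable {k B : Type*}

theorem mapDomain_mul_single_one [Semiring k] [Mul B] {α : Type*} {χ : B → α} {p : B}
    (h : ∀ x, χ (x * p) = χ x) (f : k[B]) : (f * single p 1).mapDomain χ = f.mapDomain χ := by
  induction f using induction_linear with
  | zero => simp
  | add f g hf hg => rw [add_mul, mapDomain_add, mapDomain_add, hf, hg]
  | single a r => rw [single_mul_single, mul_one, mapDomain_single, mapDomain_single, h]

theorem mul_single_one_eq_self [Semiring k] [Mul B] {f : k[B]} {y : B}
    (h : ∀ v ∈ f.coeff.support, v * y = v) : f * single y 1 = f := by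
  ext v
  rw [coeff_mul_single_eq_coeff_mul v fun w hw => by rw [h w hw], mul_one]

theorem mul_eq_self_of_forall_single_mul [CommSemiring k] [Mul B] {η : k[B]}
    (h : ∀ b, single b (1 : k) * η = single b 1) (x : k[B]) : x * η = x := by
  induction x using induction_linear with
  | zero => simp
  | add f g hf hg => rw [add_mul, hf, hg]
  | single b r => rw [← mul_one r, ← smul_single', smul_mul_assoc, h]

noncomputable def augmentation [CommSemiring k] [Mul B] : k[B] →ₙₐ[k] k := liftMagma k 1

@[simp]
theorem augmentation_single [CommSemiring k] [Mul B] (b : B) (r : k) :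
    augmentation (single b r) = r := by
  simp [augmentation]
  exact mul_one r

noncomputable def restrict [Semiring k] [Mul B] (S : Subsemigroup B) : k[B] →+ k[S] :=
  comapDomainAddMonoidHom (↑) Subtype.val_injective

section Restrict

variable [Semiring k] [Mul B] {S : Subsemigroup B}

theorem coeff_restrict (f : k[B]) (s : S) : (restrict S f).coeff s = f.coeff s := by
  simp [restrict, coeff_comapDomain]

theorem restrict_single_of_mem {b : B} (hb : b ∈ S) (r : k) :
    restrict S (single b r) = single ⟨b, hb⟩ r :=
  comapDomain_single_map (R := k) (Subtype.val : S → B) Subtype.val_injective ⟨b, hb⟩ r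

theorem restrict_single_of_notMem {b : B} (hb : b ∉ S) (r : k) :
    restrict S (single b r) = 0 :=
  comapDomain_single_of_not_mem_range (by simpa using hb) Subtype.val_injective

theorem restrict_mul (hS : ∀ x y, x * y ∈ S → x ∈ S ∧ y ∈ S) (f g : k[B]) :
    restrict S (f * g) = restrict S f * restrict S g := by
  induction f using induction_linear with
  | zero => simp
  | add f₁ f₂ h₁ h₂ => rw [add_mul, map_add, map_add, h₁, h₂, add_mul]
  | single a r =>
  induction g using induction_linear with
  | zero => simp
  | add g₁ g₂ h₁ h₂ => rw [mul_add, map_add, map_add, h₁, h₂, mul_add]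
  | single b s =>
  rw [single_mul_single]
  by_cases hab : a * b ∈ S
  · obtain ⟨ha, hb⟩ := hS a b hab
    rw [restrict_single_of_mem hab, restrict_single_of_mem ha, restrict_single_of_mem hb,
      single_mul_single]
    rfl
  · rw [restrict_single_of_notMem hab]
    by_cases ha : a ∈ S
    · rw [restrict_single_of_notMem fun hb => hab (S.mul_mem ha hb), mul_zero]
    · rw [restrict_single_of_notMem ha, zero_mul]

end Restrict

end MonoidAlgebra

namespace IsLeftRegularBand

open MonoidAlgebra

variable {k B : Type*} [Semigroup B]

theorem single_mul_mul_single [Semiring k] (hB : IsLeftRegularBand B) (b : B) (f : k[B]) :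
    single b (1 : k) * f * single b 1 = single b 1 * f := by
  induction f using induction_linear with
  | zero => simp
  | add f g hf hg => rw [mul_add, add_mul, hf, hg]
  | single a r => rw [single_mul_single, single_mul_single, one_mul, mul_one, hB.left_regular]

theorem exists_mul_eq_self [CommRing k] [Finite B] (hB : IsLeftRegularBand B) :
    ∃ η : k[B], ∀ x, x * η = x := by
  classical
  have := Fintype.ofFinite B
  suffices ∀ s : Finset B, ∃ η : k[B], ∀ b ∈ s, single b (1 : k) * η = single b 1 by
    obtain ⟨η, hη⟩ := this Finset.univ
    exact ⟨η, mul_eq_self_of_forall_single_mul fun b => hη b (Finset.mem_univ b)⟩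
  intro s
  induction s using Finset.induction_on with
  | empty => exact ⟨0, by simp⟩
  | insert a s _ ih =>
    obtain ⟨η, hη⟩ := ih
    -- `a * η * a = a * η` kills the defect at `a` without disturbing the elements of `s`
    refine ⟨η + single a 1 - η * single a 1,
      Finset.forall_mem_insert .. |>.mpr ⟨?_, fun b hb => ?_⟩⟩
    · rw [mul_sub, mul_add, ← mul_assoc, hB.single_mul_mul_single, single_mul_single, hB.idem,
        one_mul]
      abel
    · rw [mul_sub, mul_add, ← mul_assoc, hη b hb, single_mul_single, one_mul]
      abel

end IsLeftRegularBand

section Identity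

open MonoidAlgebra

variable {k B : Type*} [CommRing k] [Semigroup B]

theorem mul_eq_self_of_coeff_mul_single_eq (hconn : ContractionsConnected B)
    {z : B} (hz : ∀ u, z * u = z) {η : k[B]} (hη : ∀ x, x * η = x)
    (hcoeff : ∀ u b, u * z ≠ u → (η * single b 1).coeff u = (single b 1 : k[B]).coeff u)
    (x : k[B]) : η * x = x := by
  set γ : B → k[B] := fun b => η * single b 1 - single b 1
  -- `γ b` lives on the minimal ideal `Bz`, whose elements are left zeros
  have hγ_mul : ∀ b y, γ (b * y) = γ b := by
    intro b y
    have hsupp : ∀ v ∈ (γ b).coeff.support, v * y = v := by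
      intro v hv
      have hvz : v * z = v := by
        by_contra hvz
        simp [γ, hcoeff v b hvz] at hv
      rw [← hvz, mul_assoc, hz]
    calc γ (b * y) = γ b * single y 1 := by
          simp only [γ, sub_mul, mul_assoc, single_mul_single, one_mul]
      _ = γ b := mul_single_one_eq_self hsupp
  have hγ : ∀ b, γ b = γ z := fun b =>
    apply_eq_of_reflTransGen_contractionRel hγ_mul (hconn z b (hz b) z (hz z))
  have hη_mul : ∀ x, η * x = x + augmentation x • γ z := by
    intro x
    induction x using induction_linear with
    | zero => simp
    | add f g hf hg => rw [mul_add, hf, hg, map_add, add_smul]; abel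
    | single b r =>
      rw [← hγ b, ← mul_one r, ← smul_single', mul_smul_comm, map_smul, augmentation_single,
        smul_eq_mul, mul_one, smul_sub]
      abel
  have haug : augmentation η = (1 : k) := by
    simpa using congrArg augmentation (hη (single z 1))
  have hγz : γ z = 0 := by simpa [hη η, haug] using hη_mul η
  simpa [hγz] using hη_mul x

end Identity

namespace IsLeftRegularBand

open MonoidAlgebra

variable {k B : Type*} [Semigroup B]

theorem mul_eq_self_of_mul_eq_self [CommRing k] [Finite B] (hB : IsLeftRegularBand B)
    (hconn : ContractionsConnected B) {η : k[B]} (hη : ∀ x, x * η = x) (x : k[B]) :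
    η * x = x := by
  induction hn : Nat.card B using Nat.strong_induction_on generalizing B with
  | _ n ih =>
  obtain hempty | hnonempty := isEmpty_or_nonempty B
  · ext b
    exact isEmptyElim b
  obtain ⟨z, hz⟩ := hB.exists_forall_mul_eq
  refine mul_eq_self_of_coeff_mul_single_eq hconn hz hη (fun u b hu => ?_) x
  have hS := hB.mem_contraction_of_mul_mem u
  have hcard : Nat.card (contraction u) < n :=
    hn ▸ Finite.card_subtype_lt (p := (· ∈ contraction u)) hu
  have hηS : ∀ y : k[contraction u], y * restrict _ η = y :=
    mul_eq_self_of_forall_single_mul fun s => by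
      rw [← restrict_single_of_mem s.2, ← restrict_mul hS, hη]
  have := ih _ hcard (hB.subsemigroup _) (contractionsConnected_contraction hconn u) hηS
    (restrict _ (single b 1)) rfl
  rw [← restrict_mul hS] at this
  simpa only [coeff_restrict] using congr(($this).coeff ⟨u, hB.idem u⟩)

theorem exists_identity [CommRing k] [Finite B] (hB : IsLeftRegularBand B)
    (hconn : ContractionsConnected B) : ∃ η : k[B], ∀ x, η * x = x ∧ x * η = x := by
  obtain ⟨η, hη⟩ := hB.exists_mul_eq_self (k := k)
  exact ⟨η, fun x => ⟨hB.mul_eq_self_of_mul_eq_self hconn hη x, hη x⟩⟩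

theorem contractionsConnected_of_mul_eq_self [CommSemiring k] [Nontrivial k]
    (hB : IsLeftRegularBand B) {η : k[B]} (hη : ∀ x, η * x = x) : ContractionsConnected B := by
  intro c a ha b hb
  set χ : B → Prop := ReflTransGen (ContractionRel c) a
  have hχ : ∀ p, c * p = c → single (χ p) (1 : k) = η.mapDomain χ := by
    intro p hp
    rw [← mapDomain_single, ← hη (single p 1), mapDomain_mul_single_one]
    intro x
    refine propext ⟨fun h => h.tail (hB.contractionRel_mul_right ?_).symm, fun h => h.tail ?_⟩
    · exact mul_eq_of_reflTransGen_contractionRel ha h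
    · refine hB.contractionRel_mul_right ?_
      rw [← mul_assoc, mul_eq_of_reflTransGen_contractionRel ha h, hp]
  have hab : χ a = χ b := by
    simpa [single_left_inj] using (hχ a ha).trans (hχ b hb).symm
  exact cast hab .refl

end IsLeftRegularBand

/-- A finite left regular band `B` is connected (every contraction `B_{≥Bc}` has a
connected comparability graph) iff `ℤB` is unital, iff `kB` is unital for every
commutative ring `k`. -/
theorem stmt7 {B : Type*} [Semigroup B] [Fintype B]
    (idem : ∀ x : B, x * x = x) (lrb : ∀ x y : B, x * y * x = x * y) :
    ((∀ c : B, ∀ a ∈ {u : B | leftIdeal c ⊆ leftIdeal u},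
        ∀ b ∈ {u : B | leftIdeal c ⊆ leftIdeal u},
          Relation.ReflTransGen
            (fun u v : B => u ∈ {w : B | leftIdeal c ⊆ leftIdeal w} ∧
              v ∈ {w : B | leftIdeal c ⊆ leftIdeal w} ∧ (v * u = u ∨ u * v = v)) a b) ↔
      (∃ η : MonoidAlgebra ℤ B, ∀ x : MonoidAlgebra ℤ B, η * x = x ∧ x * η = x)) ∧
    ((∀ c : B, ∀ a ∈ {u : B | leftIdeal c ⊆ leftIdeal u},
        ∀ b ∈ {u : B | leftIdeal c ⊆ leftIdeal u},
          Relation.ReflTransGen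
            (fun u v : B => u ∈ {w : B | leftIdeal c ⊆ leftIdeal w} ∧
              v ∈ {w : B | leftIdeal c ⊆ leftIdeal w} ∧ (v * u = u ∨ u * v = v)) a b) ↔
      (∀ (k : Type*) [CommRing k],
        ∃ η : MonoidAlgebra k B, ∀ x : MonoidAlgebra k B, η * x = x ∧ x * η = x)) := by
  have hB : IsLeftRegularBand B := ⟨idem, lrb⟩
  simp only [Set.mem_ofPred_eq, leftIdeal_subset_leftIdeal_iff idem]
  change (ContractionsConnected B ↔ _) ∧ (ContractionsConnected B ↔ _)
  refine ⟨⟨hB.exists_identity, fun ⟨η, hη⟩ => ?_⟩, ⟨fun h k _ => hB.exists_identity h, fun h => ?_⟩⟩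
  · exact hB.contractionsConnected_of_mul_eq_self fun x => (hη x).1
  · obtain ⟨η, hη⟩ := h (ULift ℤ)
    exact hB.contractionsConnected_of_mul_eq_self fun x => (hη x).1
end

section
/- Let k be a commutative ring with unit and Λ a finite meet semilattice, regarded as a commutative semigroup under the operation x·y := x ⊓ y. Then the map Φ from the semigroup algebra kΛ to the product ring k^Λ (functions Λ → k with pointwise operations), defined on f ∈ kΛ by Φ(f)(z) = Σ_{x ∈ Λ, z ≤ x} f(x), is additive, multiplicative (Φ(f·g) = Φ(f)·Φ(g) pointwise), and bijective. In particular kΛ ≅ k^Λ as rings, so kΛ is unital. -/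
/-!
On the basis element `x` of `kΛ` the map is the indicator `z ↦ [z ≤ x]`, and
`[z ≤ x ⊓ y] = [z ≤ x] [z ≤ y]`, which gives multiplicativity. Bijectivity is Möbius inversion on
the finite poset `Λ`: `f x = ∑_{y ≥ x} μ(x, y) Φ(f)(y)`.
-/

open Finset

section UpperSum

variable {Λ M : Type*} [PartialOrder Λ] [Fintype Λ] [DecidableLE Λ]

def upperSum [AddCommMonoid M] (f : Λ → M) (z : Λ) : M :=
  ∑ x ∈ univ.filter (z ≤ ·), f x

lemma upperSum_add [AddCommMonoid M] (f g : Λ → M) :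
    upperSum (f + g) = upperSum f + upperSum g := by
  ext z
  exact sum_add_distrib

@[simp]
lemma upperSum_zero [AddCommMonoid M] : upperSum (0 : Λ → M) = 0 := by
  ext z
  exact sum_const_zero

variable [AddCommGroup M]

section Moebius

open IncidenceAlgebra

variable [LocallyFiniteOrder Λ]

lemma sum_upper_sum_upper_eq_sum_Icc {N : Type*} [AddCommMonoid N] (F : Λ → Λ → N) (z : Λ) :
    ∑ x ∈ univ.filter (z ≤ ·), ∑ y ∈ univ.filter (x ≤ ·), F x y =
      ∑ y ∈ univ.filter (z ≤ ·), ∑ x ∈ Icc z y, F x y :=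
  sum_comm' fun x y => by simp only [mem_filter, mem_univ, true_and, mem_Icc]; grind

variable [DecidableEq Λ]

def moebiusUpperSum (g : Λ → M) (x : Λ) : M :=
  ∑ y ∈ univ.filter (x ≤ ·), mu ℤ x y • g y

lemma upperSum_moebiusUpperSum (g : Λ → M) : upperSum (moebiusUpperSum g) = g := by
  ext z
  calc upperSum (moebiusUpperSum g) z
      = ∑ y ∈ univ.filter (z ≤ ·), (∑ x ∈ Icc z y, mu ℤ x y) • g y := by
        simp only [upperSum, moebiusUpperSum, sum_upper_sum_upper_eq_sum_Icc, sum_smul]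
    _ = g z := by simp [sum_Icc_mu_left]

lemma moebiusUpperSum_upperSum (f : Λ → M) : moebiusUpperSum (upperSum f) = f := by
  ext x
  calc moebiusUpperSum (upperSum f) x
      = ∑ w ∈ univ.filter (x ≤ ·), (∑ y ∈ Icc x w, mu ℤ x y) • f w := by
        simp only [upperSum, moebiusUpperSum, smul_sum, ← sum_upper_sum_upper_eq_sum_Icc, sum_smul]
    _ = f x := by simp [sum_Icc_mu_right]

end Moebius

lemma upperSum_bijective : Function.Bijective (upperSum : (Λ → M) → Λ → M) := by
  classical
  let := Fintype.toLocallyFiniteOrder (α := Λ)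
  exact Function.bijective_iff_has_inverse.2
    ⟨moebiusUpperSum, moebiusUpperSum_upperSum, upperSum_moebiusUpperSum⟩

end UpperSum

section SemigroupAlgebra

variable {k Λ : Type*} [Semiring k] [Fintype Λ]

lemma upperSum_coeff_single [PartialOrder Λ] [DecidableLE Λ] (a : Λ) (c : k) :
    upperSum (MonoidAlgebra.single a c).coeff = fun z => if z ≤ a then c else 0 := by
  ext z
  rw [upperSum, sum_filter, sum_eq_single a (fun b _ hb => by simp [hb]) (by simp)]
  simp

lemma upperSum_coeff_mul [SemilatticeInf Λ] [DecidableLE Λ] [Mul Λ]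
    (hmul : ∀ x y : Λ, x * y = x ⊓ y) (f g : MonoidAlgebra k Λ) :
    upperSum (f * g).coeff = upperSum f.coeff * upperSum g.coeff := by
  induction f using MonoidAlgebra.induction_linear with
  | zero => simp
  | add f₁ f₂ h₁ h₂ =>
    simp only [add_mul, MonoidAlgebra.coeff_add, Finsupp.coe_add, upperSum_add, h₁, h₂]
  | single a c =>
    induction g using MonoidAlgebra.induction_linear with
    | zero => simp
    | add g₁ g₂ h₁ h₂ =>
      simp only [mul_add, MonoidAlgebra.coeff_add, Finsupp.coe_add, upperSum_add, h₁, h₂]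
    | single b d =>
      ext z
      simp only [MonoidAlgebra.single_mul_single, upperSum_coeff_single, hmul, le_inf_iff,
        Pi.mul_apply, ite_zero_mul_ite_zero]

end SemigroupAlgebra

open Finset in
/-- Solomon's theorem: for a finite meet semilattice `Λ` (with multiplication `x ⊓ y`)
and a commutative ring `k`, the map `Φ(f)(z) = Σ_{z ≤ x} f(x)` is an additive,
multiplicative bijection from the semigroup algebra `kΛ` to the product ring `k^Λ`;
in particular `kΛ ≅ k^Λ` is unital. -/
theorem stmt8 {k : Type*} [CommRing k] {Λ : Type*} [Fintype Λ] [SemilatticeInf Λ]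
    [DecidableRel ((· ≤ ·) : Λ → Λ → Prop)]
    [Mul Λ] (hmul : ∀ x y : Λ, x * y = x ⊓ y) :
    (∀ f g : MonoidAlgebra k Λ, ∀ z : Λ,
      (∑ x ∈ univ.filter (fun x => z ≤ x), (f + g).coeff x) =
        (∑ x ∈ univ.filter (fun x => z ≤ x), f.coeff x) +
          (∑ x ∈ univ.filter (fun x => z ≤ x), g.coeff x)) ∧
    (∀ f g : MonoidAlgebra k Λ, ∀ z : Λ,
      (∑ x ∈ univ.filter (fun x => z ≤ x), (f * g).coeff x) =
        (∑ x ∈ univ.filter (fun x => z ≤ x), f.coeff x) *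
          (∑ x ∈ univ.filter (fun x => z ≤ x), g.coeff x)) ∧
    Function.Bijective (fun (f : MonoidAlgebra k Λ) (z : Λ) =>
      ∑ x ∈ univ.filter (fun x => z ≤ x), f.coeff x) := by
  refine ⟨fun f g => congrFun (upperSum_add f.coeff g.coeff),
    fun f g => congrFun (upperSum_coeff_mul hmul f g), ?_⟩
  have coeff_bijective : Function.Bijective fun f : MonoidAlgebra k Λ => ⇑f.coeff :=
    Finsupp.equivFunOnFinite.bijective.comp MonoidAlgebra.coeffEquiv.bijective
  exact upperSum_bijective.comp coeff_bijective
end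

section
/- Let k be a commutative ring with unit, Λ a finite meet semilattice (regarded as a commutative semigroup under x·y := x ⊓ y), and suppose m : Λ × Λ → k satisfies the Möbius-function property: for all z ≤ x in Λ, Σ_{y ∈ Λ, z ≤ y ≤ x} m(y, x) equals 1 if z = x and 0 otherwise. For x ∈ Λ define ε_x := Σ_{z ∈ Λ, z ≤ x} m(z, x)·z in the semigroup algebra kΛ. Then: (a) ε_x·ε_x = ε_x for every x; (b) ε_x·ε_y = 0 whenever x ≠ y; (c) Σ_{x ∈ Λ} ε_x is a two-sided multiplicative identity of kΛ; (d) for every y ∈ Λ (viewed as a basis element of kΛ) and x ∈ Λ, y·ε_x = ε_x if x ≤ y and y·ε_x = 0 otherwise. -/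
open Finset in
/-- The element `ε_x = Σ_{z ≤ x} μ(z,x)·z` of the semigroup algebra of a finite
meet semilattice. -/
noncomputable def mobiusIdem {k : Type*} [CommRing k] {Λ : Type*} [Fintype Λ] [SemilatticeInf Λ]
    [DecidableRel ((· ≤ ·) : Λ → Λ → Prop)] (m : Λ → Λ → k) (x : Λ) :
    MonoidAlgebra k Λ :=
  ∑ z ∈ univ.filter (fun z => z ≤ x), MonoidAlgebra.single z (m z x)

/-!
Send the basis element `t` of `kΛ` to the indicator function of the down-set of `t` in `k^Λ`.
Since the down-set of `s ⊓ t` is the intersection of those of `s` and `t`, this is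
multiplicative, and it is injective because its matrix is unitriangular. The Möbius property
says precisely that it maps `ε_x` to the point mass at `x`, so the four identities reduce to the
corresponding ones for point masses in the product ring `k^Λ`.
-/

open Finset MonoidAlgebra

section ZetaTransform

variable {k : Type*} [CommRing k] {Λ : Type*} [SemilatticeInf Λ]
  [DecidableRel ((· ≤ ·) : Λ → Λ → Prop)] [Mul Λ]

variable (k) in
def iicIndicatorHom (hmul : ∀ x y : Λ, x * y = x ⊓ y) : Λ →ₙ* (Λ → k) where
  toFun t x := if x ≤ t then 1 else 0
  map_mul' s t := by
    ext x
    simp only [hmul, le_inf_iff, Pi.mul_apply, ite_zero_mul_ite_zero, mul_one]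

variable (k) in
noncomputable def zetaTransform (hmul : ∀ x y : Λ, x * y = x ⊓ y) :
    MonoidAlgebra k Λ →ₙₐ[k] (Λ → k) :=
  liftMagma k (iicIndicatorHom k hmul)

variable (hmul : ∀ x y : Λ, x * y = x ⊓ y)

theorem zetaTransform_single (t : Λ) (c : k) :
    zetaTransform k hmul (single t c) = fun x => if x ≤ t then c else 0 := by
  ext x
  simp [zetaTransform, iicIndicatorHom]

theorem zetaTransform_apply [Fintype Λ] (f : MonoidAlgebra k Λ) (x : Λ) :
    zetaTransform k hmul f x = ∑ t ∈ univ.filter (x ≤ ·), f.coeff t := by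
  induction f using MonoidAlgebra.induction_linear with
  | zero => simp
  | add f g hf hg => simp [hf, hg, sum_add_distrib]
  | single t c => classical simp [zetaTransform_single, Finsupp.single_apply]

theorem zetaTransform_injective [Finite Λ] : Function.Injective (zetaTransform k hmul) := by
  have := Fintype.ofFinite Λ
  rw [injective_iff_map_eq_zero]
  intro f hf
  ext x
  induction x using WellFoundedGT.induction with
  | _ x ih =>
    have hx := congrFun hf x
    rwa [zetaTransform_apply, sum_eq_single_of_mem x (by simp)
      fun t ht hne => ih t (lt_of_le_of_ne (mem_filter.1 ht).2 hne.symm)] at hx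

theorem zetaTransform_mobiusIdem [Fintype Λ] [DecidableEq Λ] (m : Λ → Λ → k)
    (hm : ∀ z x : Λ, z ≤ x →
      (∑ y ∈ univ.filter (fun y => z ≤ y ∧ y ≤ x), m y x) = if z = x then 1 else 0)
    (x : Λ) : zetaTransform k hmul (mobiusIdem m x) = Pi.single x 1 := by
  ext w
  rw [mobiusIdem, map_sum, Finset.sum_apply]
  simp only [zetaTransform_single, ← sum_filter, filter_filter, and_comm (a := _ ≤ x)]
  by_cases hwx : w ≤ x
  · rw [hm w x hwx, Pi.single_apply]
  · rw [Pi.single_eq_of_ne (fun h => hwx h.le), filter_false_of_mem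
      fun y _ hy => hwx (hy.1.trans hy.2), sum_empty]

end ZetaTransform

open Finset in
/-- For a finite meet semilattice `Λ` regarded as a semigroup under `⊓`, the elements
`ε_x = Σ_{z ≤ x} μ(z,x)·z` built from the Möbius function form a complete set of
orthogonal idempotents of `kΛ` summing to a two-sided identity, and
`y·ε_x = ε_x` if `x ≤ y`, and `0` otherwise. -/
theorem stmt9 {k : Type*} [CommRing k] {Λ : Type*} [Fintype Λ] [SemilatticeInf Λ]
    [DecidableEq Λ] [DecidableRel ((· ≤ ·) : Λ → Λ → Prop)]
    [Mul Λ] (hmul : ∀ x y : Λ, x * y = x ⊓ y)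
    (m : Λ → Λ → k)
    (hm : ∀ z x : Λ, z ≤ x →
      (∑ y ∈ univ.filter (fun y => z ≤ y ∧ y ≤ x), m y x) = if z = x then 1 else 0) :
    (∀ x : Λ, mobiusIdem m x * mobiusIdem m x = mobiusIdem m x) ∧
    (∀ x y : Λ, x ≠ y → mobiusIdem m x * mobiusIdem m y = 0) ∧
    (∀ f : MonoidAlgebra k Λ,
      (∑ x : Λ, mobiusIdem m x) * f = f ∧ f * (∑ x : Λ, mobiusIdem m x) = f) ∧
    (∀ y x : Λ, MonoidAlgebra.single y (1 : k) * mobiusIdem m x =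
      if x ≤ y then mobiusIdem m x else 0) := by
  have hinj := zetaTransform_injective (k := k) hmul
  have hε := zetaTransform_mobiusIdem hmul m hm
  have hsum : zetaTransform k hmul (∑ x, mobiusIdem m x) = 1 := by
    simp only [map_sum, hε, Finset.univ_sum_single]
    rfl
  refine ⟨fun x => hinj ?_, fun x y hxy => hinj ?_, fun f => ⟨hinj ?_, hinj ?_⟩,
    fun y x => hinj ?_⟩
  · rw [map_mul, hε, ← Pi.single_mul, one_mul]
  · rw [map_mul, hε, hε, map_zero, ← Pi.single_mul_left, Pi.single_eq_of_ne hxy, mul_zero,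
      Pi.single_zero]
  · rw [map_mul, hsum, one_mul]
  · rw [map_mul, hsum, mul_one]
  · rw [map_mul, hε, ← Pi.single_mul_right, zetaTransform_single, mul_one]
    beta_reduce
    split_ifs
    · rw [hε]
    · rw [map_zero, Pi.single_zero]
end

section
/- Let B be a finite left regular band monoid (a finite monoid satisfying x·x = x and x·y·x = x·y) and k a field. Then the Jacobson radical of the unital k-algebra kB (i.e., the Jacobson radical Ideal.jacobson ⊥ of the monoid algebra MonoidAlgebra k B) is exactly the set of those r ∈ kB such that for every c ∈ B, Σ_{b ∈ B, Bb = Bc} r(b) = 0, i.e., the kernel of the k-algebra homomorphism kB → kΛ(B) induced by b ↦ Bb. -/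
theorem Finset.sum_ite_comp_eq_zero_of_sum_fiber_eq_zero {ι κ M : Type*} [Fintype ι]
    [DecidableEq κ] [AddCommMonoid M] (π : ι → κ) (Q : κ → Prop) [DecidablePred Q] (f : ι → M)
    (hf : ∀ j, Q (π j) → ∑ i, (if π i = π j then f i else 0) = 0) :
    ∑ i, (if Q (π i) then f i else 0) = 0 := by
  rw [← Finset.sum_fiberwise_of_maps_to (t := univ.image π)
    fun i _ ↦ mem_image_of_mem π (mem_univ i)]
  refine Finset.sum_eq_zero fun y hy ↦ ?_
  obtain ⟨j, -, rfl⟩ := mem_image.mp hy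
  rw [Finset.sum_filter]
  by_cases hj : Q (π j)
  · rw [← hf j hj]
    refine Finset.sum_congr rfl fun i _ ↦ ?_
    split_ifs <;> simp_all
  · refine Finset.sum_eq_zero fun i _ ↦ ?_
    split_ifs <;> simp_all

theorem MonoidAlgebra.sum_single_coeff {k B : Type*} [Semiring k] [Fintype B]
    (r : MonoidAlgebra k B) :
    ∑ b, MonoidAlgebra.single b (r.coeff b) = r := by
  conv_rhs => rw [← MonoidAlgebra.sum_coeff_single r]
  exact (Finsupp.sum_fintype _ _ fun b ↦ MonoidAlgebra.single_zero b).symm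

section Monoid

variable {B : Type*} [Monoid B]

theorem mem_leftIdeal_self (a : B) : a ∈ leftIdeal a := ⟨1, one_mul a⟩

theorem leftIdeal_subset_iff {a b : B} : leftIdeal a ⊆ leftIdeal b ↔ a ∈ leftIdeal b := by
  refine ⟨fun h ↦ h (mem_leftIdeal_self a), ?_⟩
  rintro ⟨z, rfl⟩ _ ⟨y, rfl⟩
  exact ⟨y * z, mul_assoc y z b⟩

end Monoid

class IsLeftRegularBand_s11 (B : Type*) [Monoid B] : Prop where
  mul_mul_self_eq : ∀ x y : B, x * y * x = x * y

namespace IsLeftRegularBand_s11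

variable {B : Type*} [Monoid B] [IsLeftRegularBand_s11 B]

theorem mul_self (x : B) : x * x = x := by
  simpa using mul_mul_self_eq x (1 : B)

theorem mem_leftIdeal_iff {a b : B} : a ∈ leftIdeal b ↔ a * b = a := by
  refine ⟨?_, fun h ↦ ⟨a, h⟩⟩
  rintro ⟨y, rfl⟩
  rw [mul_assoc, mul_self]

theorem mul_mul_eq_self_iff {a x y : B} : a * (x * y) = a ↔ a * x = a ∧ a * y = a := by
  refine ⟨fun h ↦ ⟨?_, ?_⟩, fun ⟨hx, hy⟩ ↦ by rw [← mul_assoc, hx, hy]⟩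
  · calc a * x = a * (x * y) * x := by rw [h]
      _ = a * (x * y) := by rw [mul_assoc, mul_mul_self_eq]
      _ = a := h
  · calc a * y = a * (x * y) * y := by rw [h]
      _ = a * (x * y) := by rw [mul_assoc, mul_assoc, mul_self]
      _ = a := h

theorem leftIdeal_mul_ssubset {w b : B} (h : w * b ≠ w) : leftIdeal (w * b) ⊂ leftIdeal w := by
  refine ⟨leftIdeal_subset_iff.mpr (mem_leftIdeal_iff.mpr (mul_mul_self_eq w b)), fun hsub ↦ h ?_⟩
  have hw : w * (w * b) = w := mem_leftIdeal_iff.mp (hsub (mem_leftIdeal_self w))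
  rwa [← mul_assoc, mul_self] at hw

open scoped Classical

section Character

variable (k : Type*)

noncomputable def character [MulZeroOneClass k] (a : B) : B →* k where
  toFun b := if a * b = a then 1 else 0
  map_one' := by simp
  map_mul' x y := by
    simp only [mul_mul_eq_self_iff]
    split_ifs <;> simp_all

noncomputable def characterAlgHom [CommSemiring k] (a : B) : MonoidAlgebra k B →ₐ[k] k :=
  MonoidAlgebra.lift k k B (character k a)

variable {k}

theorem characterAlgHom_apply [CommSemiring k] [Fintype B] (a : B) (r : MonoidAlgebra k B) :
    characterAlgHom k a r = ∑ b, if a * b = a then r.coeff b else 0 := by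
  rw [characterAlgHom, MonoidAlgebra.lift_apply, Finsupp.sum_fintype _ _ (by simp)]
  refine Finset.sum_congr rfl fun b _ ↦ ?_
  simp [character]

theorem characterAlgHom_surjective [CommSemiring k] (a : B) :
    Function.Surjective (characterAlgHom k a) :=
  fun x ↦ ⟨MonoidAlgebra.single 1 x, by simp [characterAlgHom, character]⟩

end Character

variable {k : Type*}

theorem single_mul_pow_eq_zero [CommSemiring k] [Fintype B] {r : MonoidAlgebra k B}
    (hr : ∀ a, characterAlgHom k a r = 0) :
    ∀ (n : ℕ) (w : B), (leftIdeal w).ncard ≤ n → MonoidAlgebra.single w (1 : k) * r ^ n = 0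
  | 0, w, hn => by
    have : 0 < (leftIdeal w).ncard := (Set.ncard_pos (Set.toFinite _)).mpr ⟨w, mem_leftIdeal_self w⟩
    omega
  | n + 1, w, hn => by
    have hterm : ∀ b, MonoidAlgebra.single w 1 * MonoidAlgebra.single b (r.coeff b) * r ^ n =
        (if w * b = w then r.coeff b else 0) • (MonoidAlgebra.single w 1 * r ^ n) := by
      intro b
      rw [MonoidAlgebra.single_mul_single, one_mul]
      split_ifs with h
      · rw [h, ← smul_mul_assoc, MonoidAlgebra.smul_single', mul_one]
      · have hlt := Set.ncard_lt_ncard (leftIdeal_mul_ssubset h)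
        rw [zero_smul, ← mul_one (r.coeff b), ← MonoidAlgebra.smul_single', smul_mul_assoc,
          single_mul_pow_eq_zero hr n (w * b) (by omega), smul_zero]
    calc MonoidAlgebra.single w 1 * r ^ (n + 1)
        = ∑ b, MonoidAlgebra.single w 1 * MonoidAlgebra.single b (r.coeff b) * r ^ n := by
          rw [pow_succ', ← mul_assoc, ← Finset.sum_mul, ← Finset.mul_sum,
            MonoidAlgebra.sum_single_coeff]
      _ = (∑ b, if w * b = w then r.coeff b else 0) • (MonoidAlgebra.single w 1 * r ^ n) := by
          rw [Finset.sum_smul]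
          exact Finset.sum_congr rfl fun b _ ↦ hterm b
      _ = 0 := by rw [← characterAlgHom_apply, hr, zero_smul]

theorem pow_card_eq_zero [CommSemiring k] [Fintype B] {r : MonoidAlgebra k B}
    (hr : ∀ a, characterAlgHom k a r = 0) : r ^ Fintype.card B = 0 := by
  simpa [← MonoidAlgebra.one_def] using
    single_mul_pow_eq_zero hr _ 1 ((Set.ncard_le_card _).trans (Nat.card_eq_fintype_card).le)

theorem jacobson_bot_le_ker_characterAlgHom [Field k] (a : B) :
    (⊥ : Ideal (MonoidAlgebra k B)).jacobson ≤ RingHom.ker (characterAlgHom k a) :=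
  sInf_le ⟨bot_le, RingHom.ker_isMaximal_of_surjective _ (characterAlgHom_surjective a)⟩

theorem mem_jacobson_bot_of_forall_characterAlgHom_eq_zero [CommRing k] [Fintype B]
    {r : MonoidAlgebra k B} (hr : ∀ a, characterAlgHom k a r = 0) :
    r ∈ (⊥ : Ideal (MonoidAlgebra k B)).jacobson := by
  refine Ideal.mem_jacobson_iff.mpr fun y ↦ ?_
  have hnil : IsNilpotent (y * r) := ⟨_, pow_card_eq_zero fun a ↦ by rw [map_mul, hr, mul_zero]⟩
  obtain ⟨u, hu⟩ := hnil.isUnit_add_one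
  refine ⟨↑u⁻¹, ?_⟩
  rw [Ideal.mem_bot, mul_assoc, ← mul_add_one, ← hu, Units.inv_mul, sub_self]

section ClassSums

variable [Fintype B] {M : Type*} [AddCommMonoid M] {f : B → M}

theorem sum_ite_mul_eq_self_eq_zero
    (hf : ∀ c, ∑ b, (if leftIdeal b = leftIdeal c then f b else 0) = 0) (a : B) :
    ∑ b, (if a * b = a then f b else 0) = 0 := by
  simp_rw [← mem_leftIdeal_iff]
  exact Finset.sum_ite_comp_eq_zero_of_sum_fiber_eq_zero leftIdeal (a ∈ ·) f fun j _ ↦ hf j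

theorem sum_ite_leftIdeal_eq_eq_zero (hf : ∀ a, ∑ b, (if a * b = a then f b else 0) = 0)
    (c : B) : ∑ b, (if leftIdeal b = leftIdeal c then f b else 0) = 0 := by
  suffices ∀ L : Set B, ∀ c, leftIdeal c = L →
      ∑ b, (if leftIdeal b = leftIdeal c then f b else 0) = 0 from this _ c rfl
  intro L
  induction L using WellFoundedGT.induction with
  | _ L ih =>
  rintro c rfl
  have hsplit : ∑ b, (if c * b = c then f b else 0) =
      ∑ b, (if leftIdeal b = leftIdeal c then f b else 0) +
        ∑ b, (if leftIdeal c ⊂ leftIdeal b then f b else 0) := by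
    rw [← Finset.sum_add_distrib]
    refine Finset.sum_congr rfl fun b _ ↦ ?_
    rw [← mem_leftIdeal_iff, ← leftIdeal_subset_iff, ssubset_iff_subset_ne]
    by_cases h : leftIdeal b = leftIdeal c
    · simp [h]
    · simp [h, Ne.symm h]
  have hlarger : ∑ b, (if leftIdeal c ⊂ leftIdeal b then f b else 0) = 0 :=
    Finset.sum_ite_comp_eq_zero_of_sum_fiber_eq_zero leftIdeal (leftIdeal c ⊂ ·) f
      fun j hj ↦ ih _ hj j rfl
  simpa [hsplit, hlarger] using hf c

end ClassSums

end IsLeftRegularBand_s11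

open Classical in
theorem stmt11_general {B : Type*} [Monoid B] [Fintype B] {k : Type*} [Field k]
    (lrb : ∀ x y : B, x * y * x = x * y) :
    ((Ideal.jacobson (⊥ : Ideal (MonoidAlgebra k B)) : Ideal (MonoidAlgebra k B)) :
        Set (MonoidAlgebra k B)) =
      {r : MonoidAlgebra k B | ∀ c : B,
        (∑ b : B, if leftIdeal b = leftIdeal c then r.coeff b else 0) = 0} := by
  have : IsLeftRegularBand_s11 B := ⟨lrb⟩
  ext r
  refine ⟨fun hr ↦ IsLeftRegularBand_s11.sum_ite_leftIdeal_eq_eq_zero fun a ↦ ?_, fun hr ↦ ?_⟩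
  · rw [← IsLeftRegularBand_s11.characterAlgHom_apply]
    exact IsLeftRegularBand_s11.jacobson_bot_le_ker_characterAlgHom a hr
  · refine IsLeftRegularBand_s11.mem_jacobson_bot_of_forall_characterAlgHom_eq_zero fun a ↦ ?_
    rw [IsLeftRegularBand_s11.characterAlgHom_apply]
    exact IsLeftRegularBand_s11.sum_ite_mul_eq_self_eq_zero hr a

open Classical in
/-- For a finite left regular band monoid `B` and a field `k`, the Jacobson radical of
the monoid algebra `kB` is the kernel of the support map: the set of elements whose
coefficients sum to zero over each class `{b : Bb = Bc}`. -/
theorem stmt11 {B : Type*} [Monoid B] [Fintype B] {k : Type*} [Field k]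
    (idem : ∀ x : B, x * x = x) (lrb : ∀ x y : B, x * y * x = x * y) :
    ((Ideal.jacobson (⊥ : Ideal (MonoidAlgebra k B)) : Ideal (MonoidAlgebra k B)) :
        Set (MonoidAlgebra k B)) =
      {r : MonoidAlgebra k B | ∀ c : B,
        (∑ b : B, if leftIdeal b = leftIdeal c then r.coeff b else 0) = 0} :=
  stmt11_general lrb
end

section
/- Let V be a real vector space, ι a finite index set, and fᵢ : V → ℝ (i ∈ ι) linear functionals. Then for all x, y ∈ V there exists z ∈ V such that for every i ∈ ι: sign(fᵢ(z)) = sign(fᵢ(x)) if fᵢ(x) ≠ 0, and sign(fᵢ(z)) = sign(fᵢ(y)) if fᵢ(x) = 0, where sign : ℝ → {0, +, −} is the sign function. (Equivalently: the set of sign vectors θ(V) = {(sign(fᵢ(x)))ᵢ : x ∈ V} of a central hyperplane arrangement is closed under the composition of covectors, so it is a submonoid of L^ι.) -/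
lemma sign_add_of_abs_lt {a t : ℝ} (h : |t| < |a|) :
    SignType.sign (a + t) = SignType.sign a := by
  rcases lt_trichotomy a 0 with ha | ha | ha
  · rw [sign_neg ha, sign_neg]
    rcases abs_lt.mp h with ⟨h1, h2⟩
    rw [abs_of_neg ha] at h2
    linarith
  · simp [ha] at h
    exact absurd (abs_nonneg t) (not_le.mpr h)
  · rw [sign_pos ha, sign_pos]
    rcases abs_lt.mp h with ⟨h1, h2⟩
    rw [abs_of_pos ha] at h1
    linarith

/-- The set of sign vectors of a central hyperplane arrangement is closed under
composition of covectors: for all `x, y` there is `z` whose sign vector is the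
composition of those of `x` and `y`. -/
theorem stmt17 {V : Type*} [AddCommGroup V] [Module ℝ V]
    {ι : Type*} [Finite ι] (f : ι → V →ₗ[ℝ] ℝ) (x y : V) :
    ∃ z : V, ∀ i : ι,
      (f i x ≠ 0 → SignType.sign (f i z) = SignType.sign (f i x)) ∧
      (f i x = 0 → SignType.sign (f i z) = SignType.sign (f i y)) := by
  cases nonempty_fintype ι
  rcases isEmpty_or_nonempty ι with h | h
  · exact ⟨0, fun i => isEmptyElim i⟩
  · set g : ι → ℝ := fun i =>
      if f i x = 0 then 1 else |f i x| / (|f i y| + 1) with hg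
    set ε : ℝ := Finset.univ.inf' Finset.univ_nonempty g with hε
    have hεpos : 0 < ε := by
      rw [hε, Finset.lt_inf'_iff]
      intro i _
      by_cases hi : f i x = 0
      · simp [hg, hi]
      · simp only [hg, hi, if_false]
        have : 0 < |f i y| + 1 := by positivity
        have : 0 < |f i x| := abs_pos.mpr hi
        positivity
    refine ⟨x + ε • y, fun i => ?_⟩
    have hfz : f i (x + ε • y) = f i x + ε * f i y := by simp
    constructor
    · intro hix
      rw [hfz]
      apply sign_add_of_abs_lt
      have hle : ε ≤ g i := Finset.inf'_le _ (Finset.mem_univ i)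
      rw [hg] at hle
      simp only [hix, if_false] at hle
      have h1 : 0 < |f i y| + 1 := by positivity
      have h2 : 0 < |f i x| := abs_pos.mpr hix
      rw [abs_mul, abs_of_pos hεpos]
      calc ε * |f i y| ≤ (|f i x| / (|f i y| + 1)) * |f i y| := by
            apply mul_le_mul_of_nonneg_right hle (abs_nonneg _)
        _ < |f i x| := by
            rw [div_mul_eq_mul_div, div_lt_iff₀ h1]
            nlinarith [abs_nonneg (f i y)]
    · intro hix
      rw [hfz, hix, zero_add, sign_mul, sign_pos hεpos, one_mul]
end

section
/- Let B be a finite left regular band, k a commutative ring with unit, e ∈ B, and L := {b ∈ B : Bb = Be}. Let M := B →₀ k (finitely supported functions) and N ⊆ M the k-submodule of elements supported in L. For a ∈ B let T_a : M → M be the k-linear map induced on basis elements by b ↦ a·b (Finsupp.lmapDomain along left multiplication by a). Suppose φ : M → M is a k-linear map such that φ(N) ⊆ N and such that for every a ∈ B with Be ⊆ Ba and every f ∈ N, φ(T_a f) = T_a(φ f). Then there is a scalar c ∈ k with φ(f) = c·f for all f ∈ N. (Thus the endomorphism ring of the Schützenberger representation kL over kB is isomorphic to k; in particular, over a field, kL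 is indecomposable.) -/
lemma leftIdeal_subset_iff_s18 {B : Type*} [Semigroup B] (idem : ∀ x : B, x * x = x)
    {a b : B} : leftIdeal a ⊆ leftIdeal b ↔ a * b = a := by
  constructor
  · intro h
    obtain ⟨y, hy⟩ := h ⟨a, idem a⟩
    calc a * b = y * b * b := by rw [hy]
    _ = y * (b * b) := mul_assoc _ _ _
    _ = y * b := by rw [idem]
    _ = a := hy
  · rintro h x ⟨y, hy⟩
    exact ⟨y * a, by rw [mul_assoc, h, hy]⟩

def lClass {B : Type*} [Mul B] (e : B) : Set B := {b | leftIdeal b = leftIdeal e}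

lemma mem_lClass_self {B : Type*} [Mul B] (e : B) : e ∈ lClass e := rfl

lemma Finsupp.mapDomain_eq_single_sum {α β M : Type*} [AddCommMonoid M] {f : α → β} {x : β}
    {g : α →₀ M} (h : ∀ a ∈ g.support, f a = x) :
    g.mapDomain f = single x (g.sum fun _ m => m) := by
  classical
  rw [mapDomain, sum_congr fun a ha => by rw [h a ha], Finsupp.sum, Finsupp.sum,
    single_finsetSum]

section SchutzenbergerRepresentation

variable {B : Type*} [Semigroup B] {k : Type*} [CommSemiring k]

lemma mem_supported_lClass_iff (e : B) (f : B →₀ k) :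
    f ∈ Finsupp.supported k k (lClass e) ↔ ∀ b, f b ≠ 0 → leftIdeal b = leftIdeal e := by
  simp only [Finsupp.mem_supported, Set.subset_def, Finset.mem_coe, Finsupp.mem_support_iff]
  rfl

lemma eq_smul_single_of_mapDomain_mul_left_eq (idem : ∀ x : B, x * x = x) {e : B}
    {g : B →₀ k} (hg : g ∈ Finsupp.supported k k (lClass e))
    (hfix : g.mapDomain (e * ·) = g) :
    g = (g.sum fun _ m => m) • Finsupp.single e 1 := by
  have hcollapse : ∀ b ∈ g.support, e * b = e := fun b hb =>
    (leftIdeal_subset_iff_s18 idem).mp ((Finsupp.mem_supported k g).mp hg hb).ge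
  calc g = g.mapDomain (e * ·) := hfix.symm
    _ = _ := by rw [Finsupp.mapDomain_eq_single_sum hcollapse, Finsupp.smul_single_one]

lemma mapDomain_mul_left_single_of_mem_lClass (idem : ∀ x : B, x * x = x) {e b : B}
    (hb : b ∈ lClass e) (r : k) :
    (Finsupp.single e r).mapDomain (b * ·) = Finsupp.single b r := by
  rw [Finsupp.mapDomain_single, (leftIdeal_subset_iff_s18 idem).mp (le_of_eq hb)]

end SchutzenbergerRepresentation

theorem stmt18_general {B : Type*} [Semigroup B]
    (idem : ∀ x : B, x * x = x)
    {k : Type*} [CommRing k] (e : B)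
    (φ : (B →₀ k) →ₗ[k] (B →₀ k))
    (hN : ∀ f : B →₀ k, (∀ b : B, f b ≠ 0 → leftIdeal b = leftIdeal e) →
      ∀ b : B, (φ f) b ≠ 0 → leftIdeal b = leftIdeal e)
    (hcomm : ∀ a : B, leftIdeal e ⊆ leftIdeal a →
      ∀ f : B →₀ k, (∀ b : B, f b ≠ 0 → leftIdeal b = leftIdeal e) →
        φ (Finsupp.lmapDomain k k (fun b => a * b) f) =
          Finsupp.lmapDomain k k (fun b => a * b) (φ f)) :
    ∃ c : k, ∀ f : B →₀ k,
      (∀ b : B, f b ≠ 0 → leftIdeal b = leftIdeal e) → φ f = c • f := by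
  simp only [← mem_supported_lClass_iff] at hN hcomm ⊢
  have he : Finsupp.single e (1 : k) ∈ Finsupp.supported k k (lClass e) :=
    Finsupp.single_mem_supported k 1 (mem_lClass_self e)
  set c := (φ (Finsupp.single e 1)).sum fun _ m => m
  have hφe : φ (Finsupp.single e 1) = c • Finsupp.single e 1 := by
    refine eq_smul_single_of_mapDomain_mul_left_eq idem (hN _ he) ?_
    have := hcomm e le_rfl _ he
    rwa [Finsupp.lmapDomain_apply, mapDomain_mul_left_single_of_mem_lClass idem
      (mem_lClass_self e), Finsupp.lmapDomain_apply, eq_comm] at this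
  have hφb : ∀ b ∈ lClass e, φ (Finsupp.single b 1) = c • Finsupp.single b 1 := by
    intro b hb
    have := hcomm b (le_of_eq hb.symm) _ he
    rwa [Finsupp.lmapDomain_apply, mapDomain_mul_left_single_of_mem_lClass idem hb,
      Finsupp.lmapDomain_apply, hφe, Finsupp.mapDomain_smul,
      mapDomain_mul_left_single_of_mem_lClass idem hb] at this
  refine ⟨c, fun f hf => ?_⟩
  rw [Finsupp.supported_eq_span_single] at hf
  exact LinearMap.eqOn_span' (g := c • LinearMap.id)
    (by rintro _ ⟨b, hb, rfl⟩; exact hφb b hb) hf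

/-- The endomorphism ring of the Schützenberger representation of a finite left
regular band is `k`: any `k`-linear endomorphism of `B →₀ k` preserving the span `N`
of the `L`-class of `e` and commuting on `N` with the action of every `a` with
`Be ⊆ Ba` is multiplication by a scalar on `N`.  In particular, over a field the
Schützenberger representation is indecomposable. -/
theorem stmt18 {B : Type*} [Semigroup B] [Fintype B]
    (idem : ∀ x : B, x * x = x) (lrb : ∀ x y : B, x * y * x = x * y)
    {k : Type*} [CommRing k] (e : B)
    (φ : (B →₀ k) →ₗ[k] (B →₀ k))
    (hN : ∀ f : B →₀ k, (∀ b : B, f b ≠ 0 → leftIdeal b = leftIdeal e) →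
      ∀ b : B, (φ f) b ≠ 0 → leftIdeal b = leftIdeal e)
    (hcomm : ∀ a : B, leftIdeal e ⊆ leftIdeal a →
      ∀ f : B →₀ k, (∀ b : B, f b ≠ 0 → leftIdeal b = leftIdeal e) →
        φ (Finsupp.lmapDomain k k (fun b => a * b) f) =
          Finsupp.lmapDomain k k (fun b => a * b) (φ f)) :
    ∃ c : k, ∀ f : B →₀ k,
      (∀ b : B, f b ≠ 0 → leftIdeal b = leftIdeal e) → φ f = c • f :=
  stmt18_general idem e φ hN hcomm
end

section
/- Let A be a type with decidable equality. For duplicate-free lists u, v over A define u ⋆ v := u ++ (v with all entries already occurring in u removed, keeping the left-to-right order of v). Then: (a) if u and v have no duplicate entries then u ⋆ v has no duplicate entries; (b) ⋆ is associative on duplicate-free lists; (c) the empty list is a two-sided identity for ⋆; (d) u ⋆ u = u for every duplicate-free u; (e) (u ⋆ v) ⋆ u = u ⋆ v for all duplicate-free u, v; and (f) for every monoid M satisfying the identities x·x = x and x·y·x = x·y and every map f : A → M, one has ((u ⋆ v).map f).prod = (u.map f).prod · (v.map f).prod for all duplicate-free lists u, v. (Thus the duplicate-free words, with product 'concatenate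 and delete repeated letters scanning left to right', realize the free left regular band monoid on A.) -/
/-- Product of duplicate-free words: concatenate and delete letters already seen,
scanning left to right. -/
def lstar {A : Type*} [DecidableEq A] (u v : List A) : List A :=
  u ++ v.filter (fun x => decide (x ∉ u))

lemma lstar_mem {A : Type*} [DecidableEq A] {u v : List A} {x : A} :
    x ∈ lstar u v ↔ x ∈ u ∨ x ∈ v := by
  simp only [lstar, List.mem_append, List.mem_filter, decide_eq_true_eq]
  constructor
  · rintro (h | ⟨h, _⟩) <;> [exact Or.inl h; exact Or.inr h]
  · rintro (h | h)
    · exact Or.inl h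
    · by_cases hx : x ∈ u
      · exact Or.inl hx
      · exact Or.inr ⟨h, hx⟩

lemma lstar_nodup {A : Type*} [DecidableEq A] {u v : List A}
    (hu : u.Nodup) (hv : v.Nodup) : (lstar u v).Nodup := by
  refine List.Nodup.append hu (hv.filter _) ?_
  intro x hx hx'
  simp only [List.mem_filter, decide_eq_true_eq] at hx'
  exact hx'.2 hx

lemma lstar_assoc {A : Type*} [DecidableEq A] (u v w : List A) :
    lstar (lstar u v) w = lstar u (lstar v w) := by
  simp only [lstar, List.append_assoc, List.filter_append, List.filter_filter]
  congr 2
  all_goals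
    apply List.filter_congr
    intro x _
    by_cases h1 : x ∈ u <;> by_cases h2 : x ∈ v <;>
      simp [lstar_mem, lstar, h1, h2]

lemma prod_absorb {A M : Type*} [Monoid M] (hx : ∀ a : M, a * a = a)
    (hxy : ∀ a b : M, a * b * a = a * b) (f : A → M) :
    ∀ (u : List A) (x : A), x ∈ u → (u.map f).prod * f x = (u.map f).prod := by
  intro u
  induction u with
  | nil => simp
  | cons b t ih =>
    intro x hx'
    rcases List.mem_cons.mp hx' with h | h
    · subst h
      simp only [List.map_cons, List.prod_cons]
      exact hxy _ _
    · simp only [List.map_cons, List.prod_cons, mul_assoc, ih x h]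

lemma prod_filter_aux {A M : Type*} [DecidableEq A] [Monoid M] (hx : ∀ a : M, a * a = a)
    (hxy : ∀ a b : M, a * b * a = a * b) (f : A → M) (u : List A) :
    ∀ (v : List A) (P : M), (∀ x ∈ u, P * f x = P) →
      P * (v.map f).prod = P * ((v.filter (fun x => decide (x ∉ u))).map f).prod := by
  intro v
  induction v with
  | nil => simp
  | cons a t ih =>
    intro P hP
    by_cases ha : a ∈ u
    · rw [List.filter_cons_of_neg (by simp [ha])]
      simp only [List.map_cons, List.prod_cons, ← mul_assoc, hP a ha]
      exact ih P hP
    · rw [List.filter_cons_of_pos (by simp [ha])]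
      simp only [List.map_cons, List.prod_cons, ← mul_assoc]
      apply ih (P * f a)
      intro x hxu
      have habs : ∀ a b c : M, a * b * c * b = a * b * c := by
        intro a b c
        simp only [mul_assoc]
        rw [← mul_assoc b c b, hxy b c]
      calc P * f a * f x = P * f x * f a * f x := by rw [hP x hxu]
        _ = P * f x * f a := habs P (f x) (f a)
        _ = P * f a := by rw [hP x hxu]

/-- The duplicate-free words over `A`, with product `u ⋆ v` given by concatenation
followed by deletion of repetitions, form the free left regular band monoid on `A`:
the operation preserves duplicate-freeness, is associative, has the empty word as
two-sided identity, satisfies the left regular band identities, and any map to a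
left regular band monoid extends along ordered products. -/
theorem stmt19 {A : Type*} [DecidableEq A] :
    (∀ u v : List A, u.Nodup → v.Nodup → (lstar u v).Nodup) ∧
    (∀ u v w : List A, u.Nodup → v.Nodup → w.Nodup →
      lstar (lstar u v) w = lstar u (lstar v w)) ∧
    (∀ u : List A, u.Nodup → lstar [] u = u ∧ lstar u [] = u) ∧
    (∀ u : List A, u.Nodup → lstar u u = u) ∧
    (∀ u v : List A, u.Nodup → v.Nodup → lstar (lstar u v) u = lstar u v) ∧
    (∀ (M : Type*) [Monoid M], (∀ x : M, x * x = x) → (∀ x y : M, x * y * x = x * y) →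
      ∀ f : A → M, ∀ u v : List A, u.Nodup → v.Nodup →
        ((lstar u v).map f).prod = ((u.map f).prod) * ((v.map f).prod)) := by
  refine ⟨fun u v hu hv => lstar_nodup hu hv,
    fun u v w _ _ _ => lstar_assoc u v w,
    fun u _ => ⟨by simp [lstar], by simp [lstar]⟩,
    fun u _ => ?_, fun u v _ _ => ?_, ?_⟩
  · simp [lstar, List.filter_eq_nil_iff]
  · have h : u.filter (fun x => decide (x ∉ lstar u v)) = [] := by
      rw [List.filter_eq_nil_iff]
      intro x hx
      simp [lstar_mem, hx]
    rw [show lstar (lstar u v) u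
        = lstar u v ++ u.filter (fun x => decide (x ∉ lstar u v)) from rfl,
      h, List.append_nil]
  · intro M _ hx hxy f u v _ _
    simp only [lstar, List.map_append, List.prod_append]
    have := prod_filter_aux hx hxy f u v ((u.map f).prod)
      (fun x hxu => prod_absorb hx hxy f u x hxu)
    rw [← this]
end
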